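/- arXiv:1510.04931 — 3 statements merged into one kernel-verified Lean document; each statement's English description precedes it below -/
import Mathlib

section
/- (AIXI is stupid for some Υ, core construction.) Assume Γ_1 > 0, A has at least two elements, and there are percepts e⁰, e¹ ∈ E with r(e⁰) = 0 and r(e¹) = 1. Let ξ be any CCS, let π̂ be any policy (in particular, π̂ may be taken ξ-optimal), set a₁ := π̂(ϵ), and let ν be the CCS in which a first action equal to a₁ leads deterministically to e⁰ forever and any other first action leads deterministically to e¹ forever. For ε ∈ (0,1) define ξ' := (1−ε)·ν + ε·ξ. Then Υ_{ξ'}(π̂) ≤ ε, and every policy π with π(ϵ) ≠ a₁ satisfies Υ_{ξ'}(π) ≥ 1 − ε; in particular sup_π Υ_{ξ'}(π) ≥ 1 − ε. -/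
open scoped Classical

/-- A history: a finite alternating sequence of action–percept pairs. -/
abbrev Hist (A E : Type*) := List (A × E)

/-- A policy maps histories to actions. -/
abbrev Policy (A E : Type*) := Hist A E → A

/-- A chronological conditional semimeasure (CCS, environment):
values in `[0,1]`, and the chronological semimeasure condition. -/
structure CCS (A E : Type*) [Fintype E] where
  val : Hist A E → ℝ
  nonneg : ∀ h, 0 ≤ val h
  le_one : ∀ h, val h ≤ 1
  chrono : ∀ (h : Hist A E) (a : A), (∑ e : E, val (h ++ [(a, e)])) ≤ val h

/-- `Gam γ t = Γ_t = ∑_{i ≥ t} γ_i`, the discount normalization factor. -/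
noncomputable def Gam (γ : ℕ → ℝ) (t : ℕ) : ℝ := ∑' i : ℕ, γ (t + i)

/-- Extend a history by a list of percepts, with actions chosen by the policy `π`. -/
def extendH {A E : Type*} (π : Policy A E) : Hist A E → List E → Hist A E
  | h, [] => h
  | h, e :: es => extendH π (h ++ [(π h, e)]) es

/-- The value `V^π_ν(ae_{<t})` of policy `π` in environment `ν` given history `h = ae_{<t}`
(with `t = h.length + 1`); `0` whenever `Γ_t ≤ 0` or `ν(e_{<t} ∣ a_{<t}) ≤ 0`. -/
noncomputable def V {A E : Type*} [Fintype E] (γ : ℕ → ℝ) (r : E → ℝ)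
    (π : Policy A E) (ν : CCS A E) (h : Hist A E) : ℝ :=
  if 0 < Gam γ (h.length + 1) ∧ 0 < ν.val h then
    (1 / (Gam γ (h.length + 1) * ν.val h)) *
      ∑' n : ℕ, γ (h.length + 1 + n) *
        ∑ es : Fin (n + 1) → E,
          r (es (Fin.last n)) * ν.val (extendH π h (List.ofFn es))
  else 0

/-- The value `V^π_ν(h a)` of a history ending in the action `a`:
the action at time `t` is `a`, and `π` is followed from time `t+1` on. -/
noncomputable def Vact {A E : Type*} [Fintype E] (γ : ℕ → ℝ) (r : E → ℝ)
    (π : Policy A E) (ν : CCS A E) (h : Hist A E) (a : A) : ℝ :=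
  V γ r (fun h' => if h' = h then a else π h') ν h

/-- The optimal value `V^*_ν(h) = sup_π V^π_ν(h)`. -/
noncomputable def VOpt {A E : Type*} [Fintype E] (γ : ℕ → ℝ) (r : E → ℝ)
    (ν : CCS A E) (h : Hist A E) : ℝ :=
  ⨆ π : Policy A E, V γ r π ν h

/-- The optimal value `V^*_ν(h a)` of a history ending in an action. -/
noncomputable def VOptAct {A E : Type*} [Fintype E] (γ : ℕ → ℝ) (r : E → ℝ)
    (ν : CCS A E) (h : Hist A E) (a : A) : ℝ :=
  ⨆ π : Policy A E, Vact γ r π ν h a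

/-- A history is consistent with `π` iff each of its actions is the one chosen by `π`. -/
def Consistent {A E : Type*} (π : Policy A E) (h : Hist A E) : Prop :=
  ∀ (k : ℕ) (hk : k < h.length), (h.get ⟨k, hk⟩).1 = π (h.take k)

/-- The environment in which the first action decides everything: if the first action
is `α`, it deterministically emits `eSame` forever; otherwise `eOther` forever. -/
noncomputable def firstEnv {A E : Type*} (α : A) (eSame eOther : E) : Hist A E → ℝ
  | [] => 1
  | (a, e) :: rest =>
    if a = α then (if e = eSame ∧ ∀ p ∈ rest, p.2 = eSame then 1 else 0)
    else (if e = eOther ∧ ∀ p ∈ rest, p.2 = eOther then 1 else 0)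

/-!
Under `ν` the reward at every time step is `0` for a policy whose first action is `π̂(ϵ)` and
`1` for any other policy, so by linearity of the expected reward in the environment, every
per-step expected reward in `ξ'` of `π̂` is at most `ε · ξ(ϵ)`, and that of any other policy is
at least `1 - ε`. Normalising by `ξ'(ϵ) = (1 - ε) + ε · ξ(ϵ) ∈ [ξ(ϵ), 1]` gives the bounds.
-/

section Value

variable {A E : Type*} [Fintype E]

/-- `∑_{e_{t:t+n}} r(e_{t+n}) μ(e_{1:t+n} ∣ a_{1:t+n})`, the unnormalised expected reward at
time `t + n` after the history `h`, where `t = h.length + 1`. -/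
noncomputable def stepReward (r : E → ℝ) (π : Policy A E) (μ : Hist A E → ℝ) (h : Hist A E)
    (n : ℕ) : ℝ :=
  ∑ es : Fin (n + 1) → E, r (es (Fin.last n)) * μ (extendH π h (List.ofFn es))

theorem stepReward_linear_combination (r : E → ℝ) (π : Policy A E) (f g : Hist A E → ℝ)
    (a b : ℝ) (h : Hist A E) (n : ℕ) :
    stepReward r π (fun h' => a * f h' + b * g h') h n =
      a * stepReward r π f h n + b * stepReward r π g h n := by
  simp only [stepReward, Finset.mul_sum, ← Finset.sum_add_distrib]
  exact Finset.sum_congr rfl fun _ _ => by ring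

theorem CCS.sum_val_extendH_ofFn_le (μ : CCS A E) (π : Policy A E) (n : ℕ) (h : Hist A E) :
    ∑ es : Fin n → E, μ.val (extendH π h (List.ofFn es)) ≤ μ.val h := by
  induction n generalizing h with
  | zero => simp [extendH]
  | succ n ih =>
    calc ∑ es : Fin (n + 1) → E, μ.val (extendH π h (List.ofFn es))
        = ∑ p : E × (Fin n → E), μ.val (extendH π (h ++ [(π h, p.1)]) (List.ofFn p.2)) :=
          Fintype.sum_equiv (Fin.consEquiv fun _ => E).symm _ _ fun es => by
            rw [List.ofFn_succ]
            rfl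
      _ = ∑ e : E, ∑ es : Fin n → E, μ.val (extendH π (h ++ [(π h, e)]) (List.ofFn es)) :=
          Fintype.sum_prod_type _
      _ ≤ ∑ e : E, μ.val (h ++ [(π h, e)]) := Finset.sum_le_sum fun e _ => ih _
      _ ≤ μ.val h := μ.chrono h (π h)

variable {r : E → ℝ}

theorem stepReward_nonneg (hr : ∀ e, 0 ≤ r e) (π : Policy A E) (μ : CCS A E)
    (h : Hist A E) (n : ℕ) : 0 ≤ stepReward r π μ.val h n :=
  Finset.sum_nonneg fun _ _ => mul_nonneg (hr _) (μ.nonneg _)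

theorem stepReward_le (hr : ∀ e, 0 ≤ r e ∧ r e ≤ 1) (π : Policy A E) (μ : CCS A E)
    (h : Hist A E) (n : ℕ) : stepReward r π μ.val h n ≤ μ.val h :=
  calc stepReward r π μ.val h n
      ≤ ∑ es : Fin (n + 1) → E, μ.val (extendH π h (List.ofFn es)) :=
        Finset.sum_le_sum fun _ _ => mul_le_of_le_one_left (μ.nonneg _) (hr _).2
    _ ≤ μ.val h := μ.sum_val_extendH_ofFn_le π (n + 1) h

variable {γ : ℕ → ℝ}

theorem summable_nat_add_left (hγs : Summable γ) (t : ℕ) : Summable fun n => γ (t + n) := by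
  simpa only [add_comm] using (summable_nat_add_iff t).mpr hγs

theorem tsum_shift_mul_const (t : ℕ) (c : ℝ) : ∑' n, γ (t + n) * c = Gam γ t * c :=
  tsum_mul_right

theorem summable_mul_stepReward (hγ0 : ∀ t, 0 ≤ γ t) (hγs : Summable γ)
    (hr : ∀ e, 0 ≤ r e ∧ r e ≤ 1) (π : Policy A E) (μ : CCS A E) (h : Hist A E) :
    Summable fun n => γ (h.length + 1 + n) * stepReward r π μ.val h n :=
  ((summable_nat_add_left hγs _).mul_right (μ.val h)).of_nonneg_of_le
    (fun n => mul_nonneg (hγ0 _) (stepReward_nonneg (fun e => (hr e).1) π μ h n))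
    (fun n => mul_le_mul_of_nonneg_left (stepReward_le hr π μ h n) (hγ0 _))

theorem V_eq_of_pos (π : Policy A E) (μ : CCS A E) (h : Hist A E)
    (hΓ : 0 < Gam γ (h.length + 1)) (hμ : 0 < μ.val h) :
    V γ r π μ h = (∑' n, γ (h.length + 1 + n) * stepReward r π μ.val h n) /
      (Gam γ (h.length + 1) * μ.val h) := by
  rw [V, if_pos ⟨hΓ, hμ⟩, one_div_mul_eq_div]
  rfl

theorem V_le_div_of_stepReward_le (hγ0 : ∀ t, 0 ≤ γ t) (hγs : Summable γ)
    (hr : ∀ e, 0 ≤ r e ∧ r e ≤ 1) (π : Policy A E) (μ : CCS A E) (h : Hist A E) {c : ℝ}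
    (hc : ∀ n, stepReward r π μ.val h n ≤ c) : V γ r π μ h ≤ c / μ.val h := by
  by_cases hpos : 0 < Gam γ (h.length + 1) ∧ 0 < μ.val h
  · obtain ⟨hΓ, hμ⟩ := hpos
    rw [V_eq_of_pos π μ h hΓ hμ, div_le_div_iff₀ (mul_pos hΓ hμ) hμ]
    calc (∑' n, γ (h.length + 1 + n) * stepReward r π μ.val h n) * μ.val h
        ≤ (∑' n, γ (h.length + 1 + n) * c) * μ.val h :=
          mul_le_mul_of_nonneg_right (Summable.tsum_le_tsum
            (fun n => mul_le_mul_of_nonneg_left (hc n) (hγ0 _))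
            (summable_mul_stepReward hγ0 hγs hr π μ h)
            ((summable_nat_add_left hγs _).mul_right c)) hμ.le
      _ = c * (Gam γ (h.length + 1) * μ.val h) := by rw [tsum_shift_mul_const]; ring
  · rw [V, if_neg hpos]
    exact div_nonneg ((stepReward_nonneg (fun e => (hr e).1) π μ h 0).trans (hc 0)) (μ.nonneg h)

theorem div_le_V_of_le_stepReward (hγ0 : ∀ t, 0 ≤ γ t) (hγs : Summable γ)
    (hr : ∀ e, 0 ≤ r e ∧ r e ≤ 1) (π : Policy A E) (μ : CCS A E) (h : Hist A E)
    (hΓ : 0 < Gam γ (h.length + 1)) (hμ : 0 < μ.val h) {c : ℝ}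
    (hc : ∀ n, c ≤ stepReward r π μ.val h n) : c / μ.val h ≤ V γ r π μ h := by
  rw [V_eq_of_pos π μ h hΓ hμ, div_le_div_iff₀ hμ (mul_pos hΓ hμ)]
  calc c * (Gam γ (h.length + 1) * μ.val h)
      = (∑' n, γ (h.length + 1 + n) * c) * μ.val h := by rw [tsum_shift_mul_const]; ring
    _ ≤ (∑' n, γ (h.length + 1 + n) * stepReward r π μ.val h n) * μ.val h :=
        mul_le_mul_of_nonneg_right (Summable.tsum_le_tsum
          (fun n => mul_le_mul_of_nonneg_left (hc n) (hγ0 _))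
          ((summable_nat_add_left hγs _).mul_right c)
          (summable_mul_stepReward hγ0 hγs hr π μ h)) hμ.le

theorem V_le_one (hγ0 : ∀ t, 0 ≤ γ t) (hγs : Summable γ) (hr : ∀ e, 0 ≤ r e ∧ r e ≤ 1)
    (π : Policy A E) (μ : CCS A E) (h : Hist A E) : V γ r π μ h ≤ 1 :=
  (V_le_div_of_stepReward_le hγ0 hγs hr π μ h (stepReward_le hr π μ h)).trans
    (div_self_le_one _)

end Value

section FirstEnv

variable {A E : Type*}

theorem extendH_eq_append (π : Policy A E) (l : List E) (h : Hist A E) :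
    ∃ t : Hist A E, extendH π h l = h ++ t ∧ t.map Prod.snd = l := by
  induction l generalizing h with
  | nil => exact ⟨[], by simp [extendH]⟩
  | cons e es ih =>
    obtain ⟨t, ht, hmap⟩ := ih (h ++ [(π h, e)])
    exact ⟨(π h, e) :: t, by simp [extendH, ht], by simp [hmap]⟩

theorem firstEnv_cons (α : A) (eSame eOther : E) (a : A) (e : E) (t : Hist A E) :
    firstEnv α eSame eOther ((a, e) :: t) =
      if e = (if a = α then eSame else eOther) ∧
        ∀ p ∈ t, p.2 = (if a = α then eSame else eOther) then 1 else 0 := by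
  by_cases ha : a = α <;> simp [firstEnv, ha]

theorem firstEnv_extendH_nil (π : Policy A E) (α : A) (eSame eOther : E) (es : List E)
    (hes : es ≠ []) :
    firstEnv α eSame eOther (extendH π [] es) =
      if ∀ e ∈ es, e = (if π [] = α then eSame else eOther) then 1 else 0 := by
  obtain ⟨e, l, rfl⟩ := List.exists_cons_of_ne_nil hes
  obtain ⟨t, ht, rfl⟩ := extendH_eq_append π l [(π [], e)]
  have hrun : extendH π [] (e :: t.map Prod.snd) = (π [], e) :: t := by
    simpa [extendH] using ht
  rw [hrun, firstEnv_cons]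
  simp only [List.forall_mem_cons, List.forall_mem_map]

theorem stepReward_firstEnv [Fintype E] (r : E → ℝ) (π : Policy A E) (α : A) (eSame eOther : E)
    (n : ℕ) :
    stepReward r π (firstEnv α eSame eOther) [] n = r (if π [] = α then eSame else eOther) := by
  set c := if π [] = α then eSame else eOther with hc
  have hterm : ∀ es : Fin (n + 1) → E,
      r (es (Fin.last n)) * firstEnv α eSame eOther (extendH π [] (List.ofFn es)) =
        if es = fun _ => c then r c else 0 := by
    intro es
    rw [firstEnv_extendH_nil π α eSame eOther _ (by simp)]
    simp only [List.forall_mem_ofFn_iff, ← hc]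
    by_cases hes : es = fun _ => c
    · simp [hes]
    · simp [hes, funext_iff.not.mp hes]
  simp only [stepReward, hterm, Finset.sum_ite_eq', Finset.mem_univ, if_true]

end FirstEnv

theorem AIXI_is_stupid_for_some_intelligence_general {A E : Type*} [Fintype E]
    (γ : ℕ → ℝ) (hγ0 : ∀ t, 0 ≤ γ t) (hγs : Summable γ)
    (r : E → ℝ) (hr : ∀ e : E, 0 ≤ r e ∧ r e ≤ 1)
    (hΓ1 : 0 < Gam γ 1) (hA : ∃ a b : A, a ≠ b)
    (e0 e1 : E) (hr0 : r e0 = 0) (hr1 : r e1 = 1)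
    (ξ : CCS A E) (πhat : Policy A E)
    (ε : ℝ) (hε0 : 0 < ε) (hε1 : ε < 1)
    (ν ξ' : CCS A E)
    (hν : ∀ h : Hist A E, ν.val h = firstEnv (πhat []) e0 e1 h)
    (hξ' : ∀ h : Hist A E, ξ'.val h = (1 - ε) * ν.val h + ε * ξ.val h) :
    V γ r πhat ξ' [] ≤ ε ∧
    (∀ π : Policy A E, π [] ≠ πhat [] → 1 - ε ≤ V γ r π ξ' []) ∧
    1 - ε ≤ ⨆ π : Policy A E, V γ r π ξ' [] := by
  have hreward : ∀ π n, stepReward r π ξ'.val [] n =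
      (1 - ε) * r (if π [] = πhat [] then e0 else e1) + ε * stepReward r π ξ.val [] n := by
    intro π n
    rw [funext hξ', stepReward_linear_combination, funext hν, stepReward_firstEnv]
  have hξ'_nil : ξ'.val [] = 1 - ε + ε * ξ.val [] := by rw [hξ', hν]; simp [firstEnv]
  have hξ'_pos : 0 < ξ'.val [] := by nlinarith [ξ.nonneg []]
  have hhat : V γ r πhat ξ' [] ≤ ε := by
    refine (V_le_div_of_stepReward_le hγ0 hγs hr πhat ξ' [] (c := ε * ξ.val [])
      fun n => ?_).trans ?_
    · rw [hreward, if_pos rfl, hr0]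
      nlinarith [stepReward_le hr πhat ξ [] n]
    · rw [div_le_iff₀ hξ'_pos]
      have hξ_le : ξ.val [] ≤ ξ'.val [] := by nlinarith [ξ.le_one []]
      exact mul_le_mul_of_nonneg_left hξ_le hε0.le
  have hother : ∀ π : Policy A E, π [] ≠ πhat [] → 1 - ε ≤ V γ r π ξ' [] := by
    intro π hπ
    refine le_trans ?_ (div_le_V_of_le_stepReward hγ0 hγs hr π ξ' [] hΓ1 hξ'_pos (c := 1 - ε)
      fun n => ?_)
    · exact le_div_self (by linarith) hξ'_pos (ξ'.le_one [])
    · rw [hreward, if_neg hπ, hr1]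
      nlinarith [stepReward_nonneg (fun e => (hr e).1) π ξ [] n]
  have : Nontrivial A := ⟨hA⟩
  obtain ⟨a, ha⟩ := exists_ne (πhat [])
  have hbdd : BddAbove (Set.range fun π : Policy A E => V γ r π ξ' []) := by
    refine ⟨1, ?_⟩
    rintro _ ⟨π, rfl⟩
    exact V_le_one hγ0 hγs hr π ξ' []
  exact ⟨hhat, hother, (hother (fun _ => a) ha).trans (le_ciSup hbdd _)⟩

/-- **AIXI is stupid for some Υ (core construction).** Rigging the mixture as
`ξ' = (1−ε)·ν + ε·ξ`, where `ν` sends the first action of `π̂` to hell and any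
other first action to heaven, makes `π̂` score `≤ ε` while others score `≥ 1 − ε`. -/
theorem AIXI_is_stupid_for_some_intelligence {A E : Type*} [Fintype A] [Nonempty A] [Fintype E] [Nonempty E]
    (γ : ℕ → ℝ) (hγ0 : ∀ t, 0 ≤ γ t) (hγs : Summable γ)
    (r : E → ℝ) (hr : ∀ e : E, 0 ≤ r e ∧ r e ≤ 1)
    (hΓ1 : 0 < Gam γ 1) (hA : ∃ a b : A, a ≠ b)
    (e0 e1 : E) (hr0 : r e0 = 0) (hr1 : r e1 = 1)
    (ξ : CCS A E) (πhat : Policy A E)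
    (ε : ℝ) (hε0 : 0 < ε) (hε1 : ε < 1)
    (ν ξ' : CCS A E)
    (hν : ∀ h : Hist A E, ν.val h = firstEnv (πhat []) e0 e1 h)
    (hξ' : ∀ h : Hist A E, ξ'.val h = (1 - ε) * ν.val h + ε * ξ.val h) :
    V γ r πhat ξ' [] ≤ ε ∧
    (∀ π : Policy A E, π [] ≠ πhat [] → 1 - ε ≤ V γ r π ξ' []) ∧
    1 - ε ≤ ⨆ π : Policy A E, V γ r π ξ' [] :=
  AIXI_is_stupid_for_some_intelligence_general γ hγ0 hγs r hr hΓ1 hA e0 e1 hr0 hr1 ξ πhat ε hε0 hε1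
    ν ξ' hν hξ'
end

section
/- (Any policy can be made nearly maximally intelligent, core construction.) Assume Γ_1 > 0 and e⁰ ∈ E with r(e⁰) = 0. Let ξ be a CCS with full support and π a policy such that V^π_ξ(h) > 0 for every history h consistent with π. Then for every ε > 0 there exists ε' ∈ (0,1] such that, with ν the π-dogmatic environment for ξ and ξ' := (1/2)·ν + (ε'/2)·ξ, the policy π is nearly ξ'-maximally intelligent: Υ_{ξ'}(π) > sup_{π̃} Υ_{ξ'}(π̃) − ε. -/
open scoped Classical

/-- Auxiliary function for the dogmatic environment: `pre` is the consistent
prefix processed so far, the second argument is the rest of the history. -/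
noncomputable def dogmaAux {A E : Type*} [Fintype E] (ξ : CCS A E) (π : Policy A E)
    (e0 : E) : Hist A E → Hist A E → ℝ
  | pre, [] => ξ.val pre
  | pre, (a, e) :: rest =>
    if a = π pre then dogmaAux ξ π e0 (pre ++ [(a, e)]) rest
    else if e = e0 ∧ ∀ p ∈ rest, p.2 = e0 then ξ.val pre else 0

/-- The `π`-dogmatic environment for `ξ`: mimics `ξ` while the actions follow `π`;
from the first deviation on it deterministically emits `e0` and freezes the mass. -/
noncomputable def dogma {A E : Type*} [Fintype E] (ξ : CCS A E) (π : Policy A E)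
    (e0 : E) (h : Hist A E) : ℝ :=
  dogmaAux ξ π e0 [] h

/-- A CCS has full support iff it is positive on every history. -/
def FullSupport {A E : Type*} [Fintype E] (ξ : CCS A E) : Prop :=
  ∀ h : Hist A E, 0 < ξ.val h

/-!
Along `π` the dogmatic environment `ν` coincides with `ξ`, so `ξ'` is `(1 + ε')/2 · ξ` on
`π`'s histories and `π` has the same value in `ξ'` as in `ξ`. Any other policy, as soon as it
deviates from `π`, only receives the reward-free percept `e⁰` under `ν`, so its `ν`-return is at
most the `ξ`-return of `π`, while the `ε'ξ` part adds at most `ε'` to the normalized value: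
`V^{π̃}_{ξ'}(ϵ) ≤ (V^π_ξ(ϵ) + ε')/(1 + ε') ≤ V^π_ξ(ϵ) + ε'`.
-/

section History

variable {A E : Type*}

def extendSteps (π : Policy A E) : Hist A E → List E → Hist A E
  | _, [] => []
  | h, e :: es => (π h, e) :: extendSteps π (h ++ [(π h, e)]) es

theorem extendH_eq_append_extendSteps (π : Policy A E) :
    ∀ (h : Hist A E) (es : List E), extendH π h es = h ++ extendSteps π h es
  | h, [] => by simp [extendH, extendSteps]
  | h, e :: es => by
    rw [extendH, extendSteps, extendH_eq_append_extendSteps π _ es, List.append_assoc,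
      List.singleton_append]

theorem map_snd_extendSteps (π : Policy A E) :
    ∀ (h : Hist A E) (es : List E), (extendSteps π h es).map Prod.snd = es
  | _, [] => rfl
  | h, e :: es => by simp [extendSteps, map_snd_extendSteps π _ es]

end History

section Dogma

variable {A E : Type*} [Fintype E] (ξ : CCS A E) (π : Policy A E) (e0 : E)

theorem dogmaAux_extendSteps :
    ∀ (pre : Hist A E) (es : List E),
      dogmaAux ξ π e0 pre (extendSteps π pre es) = ξ.val (extendH π pre es)
  | pre, [] => by simp [extendSteps, dogmaAux, extendH]
  | pre, e :: es => by
    simp only [extendSteps, dogmaAux, extendH]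
    exact dogmaAux_extendSteps _ es

theorem dogma_extendH_nil (es : List E) :
    dogma ξ π e0 (extendH π [] es) = ξ.val (extendH π [] es) := by
  have h := dogmaAux_extendSteps ξ π e0 [] es
  rwa [← List.nil_append (extendSteps π [] es), ← extendH_eq_append_extendSteps] at h

/-- Once `πt` deviates from `π`, the dogmatic environment only has mass on `e0`-percepts. -/
theorem dogmaAux_extendSteps_le_or_eq (πt : Policy A E) :
    ∀ (pre : Hist A E) (l : List E) (e : E),
      dogmaAux ξ π e0 pre (extendSteps πt pre (l ++ [e])) ≤ ξ.val (extendH π pre (l ++ [e])) ∨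
        e = e0
  | pre, l, e => by
    by_cases hdev : πt pre = π pre
    · cases l with
      | nil => simp [extendSteps, dogmaAux, extendH, hdev]
      | cons e' l =>
        simp only [List.cons_append, extendSteps, dogmaAux, hdev, extendH]
        exact dogmaAux_extendSteps_le_or_eq πt _ l e
    · cases l with
      | nil =>
        simp only [List.nil_append, extendSteps, dogmaAux, if_neg hdev, List.not_mem_nil,
          IsEmpty.forall_iff, implies_true, and_true]
        split_ifs with he
        · exact .inr he
        · exact .inl (ξ.nonneg _)
      | cons e' l =>
        simp only [List.cons_append, extendSteps, dogmaAux, if_neg hdev]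
        split_ifs with hconst
        · have he : e ∈ (extendSteps πt (pre ++ [(πt pre, e')]) (l ++ [e])).map Prod.snd := by
            simp [map_snd_extendSteps]
          obtain ⟨p, hp, rfl⟩ := List.mem_map.mp he
          exact .inr (hconst.2 p hp)
        · exact .inl (ξ.nonneg _)

end Dogma

section Return

variable {A E : Type*} [Fintype E] (γ : ℕ → ℝ) (r : E → ℝ) (p : Policy A E)

/-- Expected reward at time `n + 1` from the empty history, not normalized by `μ []`. -/
noncomputable def expectedReward (μ : Hist A E → ℝ) (n : ℕ) : ℝ :=
  ∑ es : Fin (n + 1) → E, r (es (Fin.last n)) * μ (extendH p [] (List.ofFn es))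

noncomputable def discountedReturn (μ : Hist A E → ℝ) : ℝ :=
  ∑' n : ℕ, γ (1 + n) * expectedReward r p μ n

theorem V_nil_eq (μ : CCS A E) :
    V γ r p μ [] = if 0 < Gam γ 1 ∧ 0 < μ.val [] then
      discountedReturn γ r p μ.val / (Gam γ 1 * μ.val []) else 0 := by
  simp only [V, List.length_nil, zero_add, discountedReturn, expectedReward, one_div_mul_eq_div]

theorem sum_extendH_le (μ : CCS A E) :
    ∀ (m : ℕ) (h : Hist A E), ∑ es : Fin m → E, μ.val (extendH p h (List.ofFn es)) ≤ μ.val h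
  | 0, h => by simp [extendH]
  | m + 1, h =>
    calc ∑ es : Fin (m + 1) → E, μ.val (extendH p h (List.ofFn es))
        = ∑ e : E, ∑ es : Fin m → E, μ.val (extendH p (h ++ [(p h, e)]) (List.ofFn es)) := by
          rw [← Fintype.sum_prod_type', ← (Fin.consEquiv fun _ => E).sum_comp]
          simp [Fin.consEquiv, List.ofFn_succ, extendH]
      _ ≤ ∑ e : E, μ.val (h ++ [(p h, e)]) :=
          Finset.sum_le_sum fun e _ => sum_extendH_le μ m _
      _ ≤ μ.val h := μ.chrono h (p h)

variable {r}

theorem expectedReward_nonneg (hr : ∀ e, 0 ≤ r e) (μ : CCS A E) (n : ℕ) :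
    0 ≤ expectedReward r p μ.val n :=
  Finset.sum_nonneg fun _ _ => mul_nonneg (hr _) (μ.nonneg _)

theorem expectedReward_le (hr : ∀ e, 0 ≤ r e ∧ r e ≤ 1) (μ : CCS A E) (n : ℕ) :
    expectedReward r p μ.val n ≤ μ.val [] :=
  (Finset.sum_le_sum fun _ _ => mul_le_of_le_one_left (μ.nonneg _) (hr _).2).trans
    (sum_extendH_le p μ (n + 1) [])

variable {γ}

theorem summable_comp_one_add (hγs : Summable γ) : Summable fun n => γ (1 + n) := by
  simpa only [add_comm 1] using (summable_nat_add_iff 1).mpr hγs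

theorem summable_discountedReturn (hγ0 : ∀ t, 0 ≤ γ t) (hγs : Summable γ)
    (hr : ∀ e, 0 ≤ r e ∧ r e ≤ 1) (μ : CCS A E) :
    Summable fun n => γ (1 + n) * expectedReward r p μ.val n :=
  Summable.of_nonneg_of_le
    (fun n => mul_nonneg (hγ0 _) (expectedReward_nonneg p (fun e => (hr e).1) μ n))
    (fun n => mul_le_of_le_one_right (hγ0 _) ((expectedReward_le p hr μ n).trans (μ.le_one [])))
    (summable_comp_one_add hγs)

theorem discountedReturn_nonneg (hγ0 : ∀ t, 0 ≤ γ t) (hr : ∀ e, 0 ≤ r e) (μ : CCS A E) :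
    0 ≤ discountedReturn γ r p μ.val :=
  tsum_nonneg fun n => mul_nonneg (hγ0 _) (expectedReward_nonneg p hr μ n)

theorem discountedReturn_le (hγ0 : ∀ t, 0 ≤ γ t) (hγs : Summable γ)
    (hr : ∀ e, 0 ≤ r e ∧ r e ≤ 1) (μ : CCS A E) :
    discountedReturn γ r p μ.val ≤ Gam γ 1 * μ.val [] := by
  calc discountedReturn γ r p μ.val ≤ ∑' n, γ (1 + n) * μ.val [] :=
        (summable_discountedReturn p hγ0 hγs hr μ).tsum_le_tsum
          (fun n => mul_le_mul_of_nonneg_left (expectedReward_le p hr μ n) (hγ0 _))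
          ((summable_comp_one_add hγs).mul_right _)
    _ = Gam γ 1 * μ.val [] := tsum_mul_right

theorem discountedReturn_mix (hγ0 : ∀ t, 0 ≤ γ t) (hγs : Summable γ)
    (hr : ∀ e, 0 ≤ r e ∧ r e ≤ 1) {μ ν ξ : CCS A E} {a b : ℝ}
    (hmix : ∀ h, μ.val h = a * ν.val h + b * ξ.val h) :
    discountedReturn γ r p μ.val =
      a * discountedReturn γ r p ν.val + b * discountedReturn γ r p ξ.val := by
  have hterm : ∀ n, γ (1 + n) * expectedReward r p μ.val n =
      a * (γ (1 + n) * expectedReward r p ν.val n) +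
        b * (γ (1 + n) * expectedReward r p ξ.val n) := fun n => by
    simp only [expectedReward, hmix, mul_add, Finset.sum_add_distrib, Finset.mul_sum]
    congr 1 <;> exact Finset.sum_congr rfl fun _ _ => by ring
  rw [discountedReturn, tsum_congr hterm,
    ((summable_discountedReturn p hγ0 hγs hr ν).mul_left a).tsum_add
      ((summable_discountedReturn p hγ0 hγs hr ξ).mul_left b),
    tsum_mul_left, tsum_mul_left, discountedReturn, discountedReturn]

theorem discountedReturn_eq_mul_of_extendH {μ μ' : Hist A E → ℝ} {c : ℝ}
    (h : ∀ l, μ' (extendH p [] l) = c * μ (extendH p [] l)) :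
    discountedReturn γ r p μ' = c * discountedReturn γ r p μ := by
  simp only [discountedReturn, expectedReward, h, ← tsum_mul_left, Finset.mul_sum]
  exact tsum_congr fun n => Finset.sum_congr rfl fun _ _ => by ring

end Return

section Value

variable {A E : Type*} [Fintype E] {γ : ℕ → ℝ} {r : E → ℝ}

theorem V_nil_eq_of_extendH_eq_mul (p : Policy A E) {μ μ' : CCS A E} {c : ℝ} (hc : 0 < c)
    (h : ∀ l, μ'.val (extendH p [] l) = c * μ.val (extendH p [] l)) :
    V γ r p μ' [] = V γ r p μ [] := by
  have hroot : μ'.val [] = c * μ.val [] := h []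
  rw [V_nil_eq, V_nil_eq, hroot, discountedReturn_eq_mul_of_extendH p h]
  simp only [mul_pos_iff_of_pos_left hc]
  rw [mul_left_comm, mul_div_mul_left _ _ hc.ne']

variable {ξ ν ξ' : CCS A E} {π : Policy A E} {e0 : E} {ε' : ℝ}

theorem discountedReturn_dogma_le (hγ0 : ∀ t, 0 ≤ γ t) (hγs : Summable γ)
    (hr : ∀ e, 0 ≤ r e ∧ r e ≤ 1) (hr0 : r e0 = 0)
    (hν : ∀ h, ν.val h = dogma ξ π e0 h) (πt : Policy A E) :
    discountedReturn γ r πt ν.val ≤ discountedReturn γ r π ξ.val := by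
  refine (summable_discountedReturn πt hγ0 hγs hr ν).tsum_le_tsum (fun n => ?_)
    (summable_discountedReturn π hγ0 hγs hr ξ)
  refine mul_le_mul_of_nonneg_left (Finset.sum_le_sum fun es _ => ?_) (hγ0 _)
  have hsplit : List.ofFn es = List.ofFn (fun i => es i.castSucc) ++ [es (Fin.last n)] := by
    rw [List.ofFn_succ', List.concat_eq_append]
  rw [hν, dogma, hsplit, extendH_eq_append_extendSteps πt [], List.nil_append]
  rcases dogmaAux_extendSteps_le_or_eq ξ π e0 πt [] _ (es (Fin.last n)) with hle | he
  · exact mul_le_mul_of_nonneg_left hle (hr _).1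
  · rw [he, hr0, zero_mul, zero_mul]

variable (hν : ∀ h, ν.val h = dogma ξ π e0 h)
  (hξ' : ∀ h, ξ'.val h = (1 / 2) * ν.val h + (ε' / 2) * ξ.val h)
include hν hξ'

theorem V_nil_dogma_mix_self (hε' : 0 ≤ ε') : V γ r π ξ' [] = V γ r π ξ [] :=
  V_nil_eq_of_extendH_eq_mul π (c := (1 + ε') / 2) (by positivity) fun l => by
    rw [hξ', hν, dogma_extendH_nil]
    ring

theorem V_nil_dogma_mix_le (hγ0 : ∀ t, 0 ≤ γ t) (hγs : Summable γ)
    (hr : ∀ e, 0 ≤ r e ∧ r e ≤ 1) (hr0 : r e0 = 0) (hε' : 0 ≤ ε') (πt : Policy A E) :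
    V γ r πt ξ' [] ≤ V γ r π ξ [] + ε' := by
  have hroot : ξ'.val [] = (1 + ε') / 2 * ξ.val [] := by
    rw [hξ', hν]
    simp only [dogma, dogmaAux]
    ring
  have hε'1 : 0 < (1 + ε') / 2 := by positivity
  rw [V_nil_eq, V_nil_eq, hroot]
  simp only [mul_pos_iff_of_pos_left hε'1]
  split_ifs with hpos
  · set D := Gam γ 1 * ξ.val []
    have hD : 0 < D := mul_pos hpos.1 hpos.2
    obtain ⟨c, hc0, hc⟩ : ∃ c, 0 ≤ c ∧ discountedReturn γ r π ξ.val = c * D :=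
      ⟨_, div_nonneg (discountedReturn_nonneg π hγ0 (fun e => (hr e).1) ξ) hD.le,
        (div_mul_cancel₀ _ hD.ne').symm⟩
    have hmix := discountedReturn_mix πt hγ0 hγs hr hξ'
    have hν_le := discountedReturn_dogma_le hγ0 hγs hr hr0 hν πt
    have hξ_le := discountedReturn_le πt hγ0 hγs hr ξ
    rw [hc, mul_div_cancel_right₀ _ hD.ne', div_le_iff₀ (mul_pos hpos.1 (mul_pos hε'1 hpos.2))]
    nlinarith [mul_nonneg (mul_nonneg (add_nonneg hc0 hε') hε') hD.le]
  · simpa using hε'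

end Value

theorem computable_policies_can_be_smart_general {A E : Type*} [Fintype E]
    (γ : ℕ → ℝ) (hγ0 : ∀ t, 0 ≤ γ t) (hγs : Summable γ)
    (r : E → ℝ) (hr : ∀ e : E, 0 ≤ r e ∧ r e ≤ 1)
    (e0 : E) (hr0 : r e0 = 0)
    (ξ : CCS A E)
    (π : Policy A E)
    (ε : ℝ) (hε : 0 < ε) :
    ∃ ε' : ℝ, 0 < ε' ∧ ε' ≤ 1 ∧
      ∀ ν ξ' : CCS A E,
        (∀ h : Hist A E, ν.val h = dogma ξ π e0 h) →
        (∀ h : Hist A E, ξ'.val h = (1 / 2) * ν.val h + (ε' / 2) * ξ.val h) →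
        (⨆ πt : Policy A E, V γ r πt ξ' []) - ε < V γ r π ξ' [] := by
  refine ⟨min (ε / 2) 1, by positivity, min_le_right _ _, fun ν ξ' hν hξ' => ?_⟩
  have hε' : 0 ≤ min (ε / 2) 1 := by positivity
  have : Nonempty (Policy A E) := ⟨π⟩
  have hsup : (⨆ πt : Policy A E, V γ r πt ξ' []) ≤ V γ r π ξ [] + min (ε / 2) 1 :=
    ciSup_le (V_nil_dogma_mix_le hν hξ' hγ0 hγs hr hr0 hε')
  rw [V_nil_dogma_mix_self hν hξ' hε']
  linarith [min_le_left (ε / 2) 1]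

/-- **Any policy can be made nearly maximally intelligent (core construction).**
For a suitable `ε'`, under the dogmatic mixture `ξ' = (1/2)·ν + (ε'/2)·ξ` the policy
`π` is nearly `ξ'`-maximally intelligent. -/
theorem computable_policies_can_be_smart {A E : Type*} [Fintype A] [Nonempty A] [Fintype E] [Nonempty E]
    (γ : ℕ → ℝ) (hγ0 : ∀ t, 0 ≤ γ t) (hγs : Summable γ)
    (r : E → ℝ) (hr : ∀ e : E, 0 ≤ r e ∧ r e ≤ 1)
    (hΓ1 : 0 < Gam γ 1)
    (e0 : E) (hr0 : r e0 = 0)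
    (ξ : CCS A E) (hfs : FullSupport ξ)
    (π : Policy A E) (hπ : ∀ h : Hist A E, Consistent π h → 0 < V γ r π ξ h)
    (ε : ℝ) (hε : 0 < ε) :
    ∃ ε' : ℝ, 0 < ε' ∧ ε' ≤ 1 ∧
      ∀ ν ξ' : CCS A E,
        (∀ h : Hist A E, ν.val h = dogma ξ π e0 h) →
        (∀ h : Hist A E, ξ'.val h = (1 / 2) * ν.val h + (ε' / 2) * ξ.val h) →
        (⨆ πt : Policy A E, V γ r πt ξ' []) - ε < V γ r π ξ' [] :=
  computable_policies_can_be_smart_general γ hγ0 hγs r hr e0 hr0 ξ π ε hε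
end

section
/- (Buddy environment.) Assume there are percepts e⁰, e¹ ∈ E with r(e⁰) = 0 and r(e¹) = 1. Let π and π̃ be policies and ρ a CCS with V^{π̃}_ρ(ϵ) > V^π_ρ(ϵ). Then there exists a deterministic CCS μ (taking only the values 0 and 1) such that V^π_μ(ϵ) > V^{π̃}_μ(ϵ); indeed μ can be chosen to reproduce a fixed finite percept sequence up to the first time k at which π and π̃ diverge on a common history, and from then on to emit e¹ forever if action π of the divergence history is taken and e⁰ forever otherwise, giving V^π_μ(ϵ) − V^{π̃}_μ(ϵ) = Γ_k/Γ_1 > 0. -/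
open scoped Classical

section BuddyAux

variable {A E : Type*}

theorem extendH_length (σ : Policy A E) (l : List E) (h : Hist A E) :
    (extendH σ h l).length = h.length + l.length := by
  induction l generalizing h with
  | nil => simp [extendH]
  | cons e es ih => simp [extendH, ih]; omega

theorem map_snd_extendH (σ : Policy A E) (l : List E) (h : Hist A E) :
    (extendH σ h l).map Prod.snd = h.map Prod.snd ++ l := by
  induction l generalizing h with
  | nil => simp [extendH]
  | cons e es ih => simp [extendH, ih]

theorem extendH_inj (σ : Policy A E) {l1 l2 : List E} {h : Hist A E}
    (heq : extendH σ h l1 = extendH σ h l2) : l1 = l2 := by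
  have := congrArg (List.map Prod.snd) heq
  rw [map_snd_extendH, map_snd_extendH] at this
  exact List.append_cancel_left this

theorem divergefind (π πt : Policy A E) :
    ∀ (l : List E) (h : Hist A E), extendH π h l ≠ extendH πt h l →
      ∃ l1 : List E, l1.length < l.length ∧ extendH π h l1 = extendH πt h l1 ∧
        π (extendH π h l1) ≠ πt (extendH π h l1) := by
  intro l
  induction l with
  | nil => intro h hne; exact absurd rfl hne
  | cons e es ih =>
    intro h hne
    by_cases hd : π h = πt h
    · have h1 : extendH π h (e :: es) = extendH π (h ++ [(π h, e)]) es := rfl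
      have h2 : extendH πt h (e :: es) = extendH πt (h ++ [(π h, e)]) es := by
        show extendH πt (h ++ [(πt h, e)]) es = _
        rw [hd]
      rw [h1, h2] at hne
      obtain ⟨l1, hlen, heq, hneq⟩ := ih (h ++ [(π h, e)]) hne
      refine ⟨e :: l1, by simpa using hlen, ?_, hneq⟩
      show extendH π (h ++ [(π h, e)]) l1 = extendH πt (h ++ [(πt h, e)]) l1
      rw [hd] at heq ⊢; exact heq
    · exact ⟨[], by simp, rfl, hd⟩

/-- The percept the buddy environment emits after history `h` when action `a` is taken. -/
noncomputable def nextP (es0 : List E) (aStar : A) (e0 e1 : E) (h : Hist A E) (a : A) : E :=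
  if hl : h.length < es0.length then es0[h.length]'hl
  else if h.length = es0.length then (if a = aStar then e1 else e0)
  else if hg : es0.length < h.length then
    (if (h[es0.length]'hg).1 = aStar then e1 else e0)
  else e0

/-- A history is `Ok` iff all its percepts are the ones the buddy environment emits. -/
def Ok (es0 : List E) (aStar : A) (e0 e1 : E) (h : Hist A E) : Prop :=
  ∀ i (hi : i < h.length),
    (h[i]'hi).2 = nextP es0 aStar e0 e1 (h.take i) (h[i]'hi).1

theorem Ok_nil (es0 : List E) (aStar : A) (e0 e1 : E) :
    Ok es0 aStar e0 e1 ([] : Hist A E) := by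
  intro i hi; simp at hi

theorem Ok_append (es0 : List E) (aStar : A) (e0 e1 : E) (h : Hist A E) (a : A) (e : E) :
    Ok es0 aStar e0 e1 (h ++ [(a, e)]) ↔
      Ok es0 aStar e0 e1 h ∧ e = nextP es0 aStar e0 e1 h a := by
  constructor
  · intro H
    constructor
    · intro i hi
      have hi' : i < (h ++ [(a, e)]).length := by simp; omega
      have h1 : (h ++ [(a, e)])[i]'hi' = h[i]'hi := List.getElem_append_left hi
      have h2 : (h ++ [(a, e)]).take i = h.take i :=
        List.take_append_of_le_length (by omega)
      have := H i hi'
      rw [h1, h2] at this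
      exact this
    · have hi' : h.length < (h ++ [(a, e)]).length := by simp
      have h1 : (h ++ [(a, e)])[h.length]'hi' = (a, e) := by
        simp
      have h2 : (h ++ [(a, e)]).take h.length = h := by
        rw [List.take_append_of_le_length le_rfl, List.take_length]
      have := H h.length hi'
      rw [h1, h2] at this
      exact this
  · rintro ⟨H, he⟩ i hi
    rcases Nat.lt_or_ge i h.length with hlt | hge
    · have h1 : (h ++ [(a, e)])[i]'hi = h[i]'hlt := List.getElem_append_left hlt
      have h2 : (h ++ [(a, e)]).take i = h.take i :=
        List.take_append_of_le_length (by omega)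
      rw [h1, h2]; exact H i hlt
    · have hie : i = h.length := by simp at hi; omega
      have h1 : (h ++ [(a, e)])[i]'hi = (a, e) := by subst hie; simp
      have h2 : (h ++ [(a, e)]).take i = h := by
        rw [hie, List.take_append_of_le_length le_rfl, List.take_length]
      rw [h1, h2]; exact he

theorem Ok_extendH_mono (es0 : List E) (aStar : A) (e0 e1 : E) (σ : Policy A E) :
    ∀ (l : List E) (h : Hist A E), Ok es0 aStar e0 e1 (extendH σ h l) →
      Ok es0 aStar e0 e1 h := by
  intro l
  induction l with
  | nil => intro h H; exact H
  | cons e es ih =>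
    intro h H
    have := ih (h ++ [(σ h, e)]) H
    exact ((Ok_append es0 aStar e0 e1 h (σ h) e).mp this).1

/-- The canonical percept sequence of policy `σ` in the buddy environment, after `h`. -/
noncomputable def pseq (es0 : List E) (aStar : A) (e0 e1 : E) (σ : Policy A E) :
    Hist A E → ℕ → List E
  | _, 0 => []
  | h, n + 1 =>
    nextP es0 aStar e0 e1 h (σ h) ::
      pseq es0 aStar e0 e1 σ (h ++ [(σ h, nextP es0 aStar e0 e1 h (σ h))]) n

theorem pseq_length (es0 : List E) (aStar : A) (e0 e1 : E) (σ : Policy A E) :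
    ∀ (n : ℕ) (h : Hist A E), (pseq es0 aStar e0 e1 σ h n).length = n := by
  intro n
  induction n with
  | zero => intro h; rfl
  | succ n ih => intro h; simp [pseq, ih]

theorem Ok_extendH_pseq (es0 : List E) (aStar : A) (e0 e1 : E) (σ : Policy A E) :
    ∀ (n : ℕ) (h : Hist A E), Ok es0 aStar e0 e1 h →
      Ok es0 aStar e0 e1 (extendH σ h (pseq es0 aStar e0 e1 σ h n)) := by
  intro n
  induction n with
  | zero => intro h H; exact H
  | succ n ih =>
    intro h H
    have hok : Ok es0 aStar e0 e1 (h ++ [(σ h, nextP es0 aStar e0 e1 h (σ h))]) :=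
      (Ok_append es0 aStar e0 e1 h (σ h) _).mpr ⟨H, rfl⟩
    exact ih _ hok

theorem Ok_unique (es0 : List E) (aStar : A) (e0 e1 : E) (σ : Policy A E) :
    ∀ (l : List E) (h : Hist A E), Ok es0 aStar e0 e1 (extendH σ h l) →
      extendH σ h l = extendH σ h (pseq es0 aStar e0 e1 σ h l.length) := by
  intro l
  induction l with
  | nil => intro h _; rfl
  | cons e es ih =>
    intro h H
    have hok1 : Ok es0 aStar e0 e1 (h ++ [(σ h, e)]) :=
      Ok_extendH_mono es0 aStar e0 e1 σ es _ H
    have he : e = nextP es0 aStar e0 e1 h (σ h) :=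
      ((Ok_append es0 aStar e0 e1 h (σ h) e).mp hok1).2
    show extendH σ (h ++ [(σ h, e)]) es = _
    rw [ih (h ++ [(σ h, e)]) H]
    simp [pseq, ← he, extendH]

theorem pseq_add (es0 : List E) (aStar : A) (e0 e1 : E) (σ : Policy A E) :
    ∀ (m n : ℕ) (h : Hist A E),
      pseq es0 aStar e0 e1 σ h (m + n) =
        pseq es0 aStar e0 e1 σ h m ++
          pseq es0 aStar e0 e1 σ (extendH σ h (pseq es0 aStar e0 e1 σ h m)) n := by
  intro m
  induction m with
  | zero => intro n h; simp [pseq, extendH]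
  | succ m ih =>
    intro n h
    have : m + 1 + n = (m + n) + 1 := by omega
    rw [this]
    show nextP es0 aStar e0 e1 h (σ h) :: pseq es0 aStar e0 e1 σ _ (m + n) = _
    rw [ih]
    rfl

theorem pseq_rep (es0 : List E) (aStar : A) (e0 e1 : E) (σ : Policy A E) :
    ∀ (m : ℕ) (h : Hist A E) (hg : es0.length < h.length),
      pseq es0 aStar e0 e1 σ h m =
        List.replicate m (if (h[es0.length]'hg).1 = aStar then e1 else e0) := by
  intro m
  induction m with
  | zero => intro h hg; rfl
  | succ m ih =>
    intro h hg
    have hv : nextP es0 aStar e0 e1 h (σ h) =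
        (if (h[es0.length]'hg).1 = aStar then e1 else e0) := by
      rw [nextP, dif_neg (by omega), if_neg (by omega), dif_pos hg]
    have hg' : es0.length < (h ++ [(σ h, nextP es0 aStar e0 e1 h (σ h))]).length := by
      simp; omega
    have hgg : ((h ++ [(σ h, nextP es0 aStar e0 e1 h (σ h))])[es0.length]'hg') =
        h[es0.length]'hg := List.getElem_append_left hg
    have hrw : List.replicate m
        (if ((h ++ [(σ h, nextP es0 aStar e0 e1 h (σ h))])[es0.length]'hg').1 = aStar
          then e1 else e0) =
        List.replicate m (if (h[es0.length]'hg).1 = aStar then e1 else e0) := by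
      rw [hgg]
    show nextP es0 aStar e0 e1 h (σ h) :: _ = _
    rw [ih _ hg', hrw, hv, List.replicate_succ]

end BuddyAux

theorem getElem_concat' {α : Type*} (l : List α) (a : α) (i : ℕ) (hi : i = l.length)
    (h : i < (l ++ [a]).length) : (l ++ [a])[i]'h = a := by
  subst hi; simp

theorem getElem_idx_congr {α : Type*} (l : List α) {i j : ℕ} (hij : i = j)
    (hi : i < l.length) : l[i]'hi = l[j]'(hij ▸ hi) := by
  subst hij; rfl
/-- **Buddy environment.** If `π̃` beats `π` in some CCS `ρ`, then there is a
deterministic CCS `μ` in which `π` beats `π̃`, with value gap exactly `Γ_k/Γ_1`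
for the divergence time `k`. -/
theorem buddy_environment {A E : Type*} [Fintype A] [Nonempty A] [Fintype E] [Nonempty E]
    (γ : ℕ → ℝ) (hγ0 : ∀ t, 0 ≤ γ t) (hγs : Summable γ)
    (r : E → ℝ) (hr : ∀ e : E, 0 ≤ r e ∧ r e ≤ 1)
    (e0 e1 : E) (hr0 : r e0 = 0) (hr1 : r e1 = 1)
    (π πt : Policy A E) (ρ : CCS A E)
    (hlt : V γ r π ρ [] < V γ r πt ρ []) :
    ∃ (μ : CCS A E) (k : ℕ),
      V γ r πt μ [] < V γ r π μ [] ∧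
      (∀ h : Hist A E, μ.val h = 0 ∨ μ.val h = 1) ∧
      1 ≤ k ∧ 0 < Gam γ k ∧
      V γ r π μ [] - V γ r πt μ [] = Gam γ k / Gam γ 1 := by
  classical
  have hsum : ∀ t : ℕ, Summable (fun i => γ (t + i)) := by
    intro t
    exact hγs.comp_injective (fun a b hab => by simpa using hab)
  have hGam0 : ∀ t, 0 ≤ Gam γ t := fun t => tsum_nonneg (fun i => hγ0 _)
  have hvan : ∀ t, ¬(0 < Gam γ t) → ∀ m, t ≤ m → γ m = 0 := by
    intro t ht m hm
    have h0 : Gam γ t = 0 := le_antisymm (not_lt.mp ht) (hGam0 t)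
    have hle : γ (t + (m - t)) ≤ Gam γ t :=
      Summable.le_tsum (hsum t) (m - t) (fun i _ => hγ0 _)
    rw [Nat.add_sub_cancel' hm] at hle
    exact le_antisymm (h0 ▸ hle) (hγ0 m)
  have hΓ1 : 0 < Gam γ 1 := by
    by_contra hc
    have h0 : ∀ (ν : CCS A E) (σ : Policy A E), V γ r σ ν [] = 0 := by
      intro ν σ
      rw [V, if_neg]
      rintro ⟨h1, -⟩
      exact hc h1
    rw [h0, h0] at hlt
    exact lt_irrefl _ hlt
  -- find a divergence point with positive remaining discount
  have hdiv : ∃ l0 : List E, extendH π [] l0 = extendH πt [] l0 ∧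
      π (extendH π [] l0) ≠ πt (extendH π [] l0) ∧ 0 < Gam γ (l0.length + 1) := by
    by_contra hcon
    push_neg at hcon
    have hVeq : V γ r π ρ [] = V γ r πt ρ [] := by
      rw [V, V]
      split
      · congr 1
        apply tsum_congr
        intro n
        rcases eq_or_ne (γ (List.length ([] : Hist A E) + 1 + n)) 0 with h0 | h0
        · rw [h0, zero_mul, zero_mul]
        · congr 1
          apply Finset.sum_congr rfl
          intro es _
          have heq : extendH π [] (List.ofFn es) = extendH πt [] (List.ofFn es) := by
            by_contra hne
            obtain ⟨l1, hlen, heq1, hneq1⟩ := divergefind π πt (List.ofFn es) [] hne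
            have hγz : γ (List.length ([] : Hist A E) + 1 + n) = 0 := by
              apply hvan (l1.length + 1) (not_lt.mpr (hcon l1 heq1 hneq1))
              rw [List.length_ofFn] at hlen
              simp only [List.length_nil]
              omega
            exact h0 hγz
          rw [heq]
      · rfl
    rw [hVeq] at hlt
    exact lt_irrefl _ hlt
  obtain ⟨l0, hl0, hl0ne, hl0Gam⟩ := hdiv
  set hst : Hist A E := extendH π [] l0 with hhst
  set aStar : A := π hst with haS
  have hextπ : extendH π [] l0 = hst := rfl
  have hextπt : extendH πt [] l0 = hst := hl0.symm
  have hlenh : hst.length = l0.length := by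
    rw [hhst, extendH_length]; simp
  -- the buddy environment
  let μ : CCS A E :=
    { val := fun h' => if Ok l0 aStar e0 e1 h' then 1 else 0
      nonneg := fun h' => by by_cases hc : Ok l0 aStar e0 e1 h' <;> simp [hc]
      le_one := fun h' => by by_cases hc : Ok l0 aStar e0 e1 h' <;> simp [hc]
      chrono := by
        intro h' a
        show (∑ e : E, if Ok l0 aStar e0 e1 (h' ++ [(a, e)]) then (1 : ℝ) else 0)
          ≤ (if Ok l0 aStar e0 e1 h' then (1 : ℝ) else 0)
        by_cases hok : Ok l0 aStar e0 e1 h'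
        · have hterm : ∀ e : E, (if Ok l0 aStar e0 e1 (h' ++ [(a, e)]) then (1 : ℝ) else 0)
              = (if e = nextP l0 aStar e0 e1 h' a then (1 : ℝ) else 0) := by
            intro e
            simp only [Ok_append, hok, true_and]
          rw [Finset.sum_congr rfl (fun e _ => hterm e),
            Finset.sum_ite_eq' Finset.univ (nextP l0 aStar e0 e1 h' a) (fun _ => (1 : ℝ)),
            if_pos (Finset.mem_univ _), if_pos hok]
        · have hterm : ∀ e : E, (if Ok l0 aStar e0 e1 (h' ++ [(a, e)]) then (1 : ℝ) else 0) = 0 :=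
            fun e => if_neg (fun hc => hok ((Ok_append l0 aStar e0 e1 h' a e).mp hc).1)
          rw [Finset.sum_congr rfl (fun e _ => hterm e), if_neg hok]
          simp }
  have hμval : ∀ h', μ.val h' = if Ok l0 aStar e0 e1 h' then 1 else 0 := fun _ => rfl
  have hdet : ∀ h' : Hist A E, μ.val h' = 0 ∨ μ.val h' = 1 := by
    intro h'
    rw [hμval]
    split
    · right; rfl
    · left; rfl
  -- the divergence history is Ok
  have hmap : hst.map Prod.snd = l0 := by
    have := map_snd_extendH π l0 ([] : Hist A E)
    simpa [hhst] using this
  have hOkh : Ok l0 aStar e0 e1 hst := by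
    intro i hi
    have hi' : i < l0.length := hlenh ▸ hi
    have htl : (hst.take i).length = i := by
      rw [List.length_take]
      omega
    have hl : (hst.take i).length < l0.length := by rw [htl]; exact hi'
    rw [nextP, dif_pos hl, getElem_idx_congr l0 htl]
    have h1 : l0[i]'hi' = (hst.map Prod.snd)[i]'(by rw [hmap]; exact hi') :=
      List.getElem_of_eq hmap.symm hi'
    rw [h1, List.getElem_map]
  -- canonical percepts: the first l0.length are l0
  have hpseq_es0 : ∀ σ : Policy A E, extendH σ [] l0 = hst →
      pseq l0 aStar e0 e1 σ [] l0.length = l0 := by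
    intro σ hσ
    have hOk' : Ok l0 aStar e0 e1 (extendH σ [] l0) := by rw [hσ]; exact hOkh
    have := Ok_unique l0 aStar e0 e1 σ l0 [] hOk'
    exact (extendH_inj σ this).symm
  -- canonical percepts beyond the divergence point
  have hpseq_full : ∀ σ : Policy A E, extendH σ [] l0 = hst → ∀ n, l0.length ≤ n →
      pseq l0 aStar e0 e1 σ [] (n + 1) =
        l0 ++ List.replicate (n + 1 - l0.length) (if σ hst = aStar then e1 else e0) := by
    intro σ hσ n hn
    obtain ⟨j, hj⟩ : ∃ j, n + 1 = l0.length + (j + 1) := ⟨n - l0.length, by omega⟩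
    have hjj : n + 1 - l0.length = j + 1 := by omega
    rw [hjj, hj, pseq_add, hpseq_es0 σ hσ, hσ]
    congr 1
    -- pseq σ hst (j+1) = replicate (j+1) v
    have hv : nextP l0 aStar e0 e1 hst (σ hst) = (if σ hst = aStar then e1 else e0) := by
      rw [nextP, dif_neg (by omega), if_pos hlenh]
    have hg' : l0.length < (hst ++ [(σ hst, nextP l0 aStar e0 e1 hst (σ hst))]).length := by
      simp [hlenh]
    have hgg : ((hst ++ [(σ hst, nextP l0 aStar e0 e1 hst (σ hst))])[l0.length]'hg')
        = (σ hst, nextP l0 aStar e0 e1 hst (σ hst)) :=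
      getElem_concat' _ _ _ hlenh.symm _
    have hrep := pseq_rep l0 aStar e0 e1 σ j
      (hst ++ [(σ hst, nextP l0 aStar e0 e1 hst (σ hst))]) hg'
    have hrw : List.replicate j
        (if ((hst ++ [(σ hst, nextP l0 aStar e0 e1 hst (σ hst))])[l0.length]'hg').1 = aStar
          then e1 else e0)
        = List.replicate j (if σ hst = aStar then e1 else e0) := by rw [hgg]
    show nextP l0 aStar e0 e1 hst (σ hst) ::
        pseq l0 aStar e0 e1 σ (hst ++ [(σ hst, nextP l0 aStar e0 e1 hst (σ hst))]) j = _
    rw [hrep, hrw, hv, List.replicate_succ]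
  -- percept values before the divergence point agree
  have hpseq_pre : ∀ σ : Policy A E, extendH σ [] l0 = hst → ∀ n, n < l0.length →
      (pseq l0 aStar e0 e1 σ [] (n + 1)).getD n e0 = l0.getD n e0 := by
    intro σ hσ n hn
    obtain ⟨m, hm⟩ : ∃ m, l0.length = (n + 1) + m := ⟨l0.length - (n + 1), by omega⟩
    have hsp := hpseq_es0 σ hσ
    rw [hm, pseq_add] at hsp
    conv_rhs => rw [← hsp]
    rw [List.getD_append _ _ _ n (by rw [pseq_length]; omega)]
  -- evaluating the sum over percept strings
  have hsumS : ∀ (σ : Policy A E) (n : ℕ),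
      (∑ es : Fin (n + 1) → E, r (es (Fin.last n)) * μ.val (extendH σ [] (List.ofFn es)))
        = r ((pseq l0 aStar e0 e1 σ [] (n + 1)).getD n e0) := by
    intro σ n
    have hlen' : (pseq l0 aStar e0 e1 σ [] (n + 1)).length = n + 1 :=
      pseq_length l0 aStar e0 e1 σ (n + 1) []
    set l' := pseq l0 aStar e0 e1 σ [] (n + 1) with hl'
    set es' : Fin (n + 1) → E := fun i => l'[(i : ℕ)]'(by rw [hlen']; exact i.isLt) with hes'
    have hofn : List.ofFn es' = l' := by
      apply List.ext_getElem (by simp [hlen'])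
      intro i h1 h2
      rw [List.getElem_ofFn]
    have hval : ∀ es : Fin (n + 1) → E,
        μ.val (extendH σ [] (List.ofFn es)) = if es = es' then 1 else 0 := by
      intro es
      rw [hμval]
      by_cases hok : Ok l0 aStar e0 e1 (extendH σ [] (List.ofFn es))
      · rw [if_pos hok, if_pos]
        have hu := Ok_unique l0 aStar e0 e1 σ (List.ofFn es) [] hok
        have hle : List.ofFn es = pseq l0 aStar e0 e1 σ [] (List.ofFn es).length :=
          extendH_inj σ hu
        rw [List.length_ofFn, ← hl', ← hofn] at hle
        exact List.ofFn_inj.mp hle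
      · rw [if_neg hok, if_neg]
        intro hee
        apply hok
        rw [hee, hofn, hl']
        exact Ok_extendH_pseq l0 aStar e0 e1 σ (n + 1) [] (Ok_nil l0 aStar e0 e1)
    calc (∑ es : Fin (n + 1) → E, r (es (Fin.last n)) * μ.val (extendH σ [] (List.ofFn es)))
        = ∑ es : Fin (n + 1) → E, (if es = es' then r (es (Fin.last n)) else 0) := by
          apply Finset.sum_congr rfl
          intro es _
          rw [hval es]
          split <;> simp
      _ = r (es' (Fin.last n)) := by
          rw [Finset.sum_ite_eq' Finset.univ es' (fun es => r (es (Fin.last n))),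
            if_pos (Finset.mem_univ _)]
      _ = r (l'.getD n e0) := by
          rw [List.getD_eq_getElem l' e0 (by rw [hlen']; omega)]
          rfl
  -- value formula
  have hOknil : Ok l0 aStar e0 e1 ([] : Hist A E) := Ok_nil l0 aStar e0 e1
  have hμnil : μ.val [] = 1 := if_pos hOknil
  have hVform : ∀ σ : Policy A E,
      V γ r σ μ [] = (1 / Gam γ 1) *
        ∑' n : ℕ, γ (1 + n) * r ((pseq l0 aStar e0 e1 σ [] (n + 1)).getD n e0) := by
    intro σ
    rw [V, if_pos ⟨hΓ1, by rw [hμnil]; norm_num⟩, hμnil, mul_one]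
    congr 1
    apply tsum_congr
    intro n
    rw [hsumS σ n]
    norm_num [List.length_nil]
  have hsummS : ∀ σ : Policy A E,
      Summable (fun n => γ (1 + n) * r ((pseq l0 aStar e0 e1 σ [] (n + 1)).getD n e0)) := by
    intro σ
    apply Summable.of_nonneg_of_le
      (fun n => mul_nonneg (hγ0 _) (hr _).1)
      (fun n => by
        calc γ (1 + n) * r ((pseq l0 aStar e0 e1 σ [] (n + 1)).getD n e0)
            ≤ γ (1 + n) * 1 := mul_le_mul_of_nonneg_left (hr _).2 (hγ0 _)
          _ = γ (1 + n) := mul_one _)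
      (hsum 1)
  -- the value gap
  have hπa : π hst = aStar := haS.symm
  have hπta : ¬(πt hst = aStar) := fun hc => hl0ne hc.symm
  have hdiff : V γ r π μ [] - V γ r πt μ [] = Gam γ (l0.length + 1) / Gam γ 1 := by
    rw [hVform π, hVform πt, ← mul_sub, ← Summable.tsum_sub (hsummS π) (hsummS πt)]
    have hptw : ∀ n : ℕ,
        γ (1 + n) * r ((pseq l0 aStar e0 e1 π [] (n + 1)).getD n e0)
          - γ (1 + n) * r ((pseq l0 aStar e0 e1 πt [] (n + 1)).getD n e0)
        = if l0.length ≤ n then γ (1 + n) else 0 := by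
      intro n
      by_cases hn : l0.length ≤ n
      · have h1 : (pseq l0 aStar e0 e1 π [] (n + 1)).getD n e0 = e1 := by
          rw [hpseq_full π hextπ n hn, List.getD_append_right _ _ _ _ hn,
            if_pos hπa, List.getD_eq_getElem _ _ (by rw [List.length_replicate]; omega),
            List.getElem_replicate]
        have h2 : (pseq l0 aStar e0 e1 πt [] (n + 1)).getD n e0 = e0 := by
          rw [hpseq_full πt hextπt n hn, List.getD_append_right _ _ _ _ hn,
            if_neg hπta, List.getD_eq_getElem _ _ (by rw [List.length_replicate]; omega),
            List.getElem_replicate]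
        rw [h1, h2, hr1, hr0, mul_one, mul_zero, sub_zero, if_pos hn]
      · have hn' : n < l0.length := by omega
        rw [hpseq_pre π hextπ n hn', hpseq_pre πt hextπt n hn', sub_self, if_neg hn]
    rw [tsum_congr hptw]
    have hshift : (∑' n : ℕ, if l0.length ≤ n then γ (1 + n) else 0)
        = Gam γ (l0.length + 1) := by
      have hinj : Function.Injective (fun j : ℕ => l0.length + j) :=
        fun a b hab => by simpa using hab
      have hsupp : Function.support (fun n : ℕ => if l0.length ≤ n then γ (1 + n) else 0) ⊆
          Set.range (fun j : ℕ => l0.length + j) := by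
        intro x hx
        simp only [Function.mem_support] at hx
        by_contra hxr
        apply hx
        rw [if_neg]
        intro hle
        exact hxr ⟨x - l0.length, by show l0.length + (x - l0.length) = x; omega⟩
      rw [Gam, ← hinj.tsum_eq hsupp]
      apply tsum_congr
      intro j
      show (if l0.length ≤ l0.length + j then γ (1 + (l0.length + j)) else 0)
        = γ (l0.length + 1 + j)
      rw [if_pos (Nat.le_add_right _ _)]
      congr 1
      omega
    rw [hshift, one_div, inv_mul_eq_div]
  have hpos : 0 < Gam γ (l0.length + 1) / Gam γ 1 := div_pos hl0Gam hΓ1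
  refine ⟨μ, l0.length + 1, ?_, hdet, by omega, hl0Gam, hdiff⟩
  exact sub_pos.mp (by rw [hdiff]; exact hpos)
end
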